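/- If any legal program-order-respecting schedule exists for the reduction trace, then for each of the m slot sequences of P₀, the three processes P_{aᵢ} 'opened' during its open subsequence have their sizes s(a_{i₁}) + s(a_{i₂}) + s(a_{i₃}) summing exactly to B; consequently the Unary 3-Partition instance has a solution. -/

import Mathlib

/-- An operation: a read or write on variable `var` with value `val` (the issuing
process is given by the position of the operation in the trace). -/
structure Op where
  isRead : Bool
  var : ℕ
  val : ℕ
deriving DecidableEq

/-- Write of value `v` to the single shared variable `x` (variable `0`). -/
def Wr (v : ℕ) : Op := ⟨false, 0, v⟩

/-- Read of value `v` from the single shared variable `x` (variable `0`). -/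
def Rd (v : ℕ) : Op := ⟨true, 0, v⟩

/-- Values `a, a', b, b', c, c'` are the six distinct integers `1,…,6`. -/
def va : ℕ := 1
def va' : ℕ := 2
def vb : ℕ := 3
def vb' : ℕ := 4
def vc : ℕ := 5
def vc' : ℕ := 6

/-- Open subsequence `Rxa Rxa' Rxa Rxa' Rxa Rxa'`. -/
def openSeq : List Op := [Rd va, Rd va', Rd va, Rd va', Rd va, Rd va']

/-- Sum subsequence `(Rxb Rxb')^B`. -/
def sumSeq (B : ℕ) : List Op := (List.replicate B [Rd vb, Rd vb']).flatten

/-- Close subsequence `Rxc Rxc' Rxc Rxc' Rxc Rxc'`. -/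
def closeSeq : List Op := [Rd vc, Rd vc', Rd vc, Rd vc', Rd vc, Rd vc']

/-- The read-only process `P₀`: `m` slot sequences. -/
def P0 (m B : ℕ) : List Op := (List.replicate m (openSeq ++ sumSeq B ++ closeSeq)).flatten

/-- Process `P_{aᵢ}`: `Wxa'`, then `s(aᵢ)` copies of `Wxb'`, then `Wxc'`. -/
def Pa (sz : ℕ) : List Op := Wr va' :: (List.replicate sz (Wr vb') ++ [Wr vc'])

/-- The trace of the reduction from Unary 3-Partition: `P₀`, the processes
`P_{a₁},…,P_{a_{3m}}`, and the auxiliary processes `P_{c₁} = (Wxa)^{3m}`,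
`P_{c₂} = (Wxb)^{mB}`, `P_{c₃} = (Wxc)^{3m}`. -/
def reductionTrace (m B : ℕ) (s : Fin (3 * m) → ℕ) : List (List Op) :=
  P0 m B :: (List.ofFn (fun i => Pa (s i)) ++
    [List.replicate (3 * m) (Wr va), List.replicate (m * B) (Wr vb),
     List.replicate (3 * m) (Wr vc)])

/-- A position of an operation in a trace: a process index and an index in that
process's sequence. -/
def Pos (procs : List (List Op)) : Type := Σ i : Fin procs.length, Fin ((procs.get i).length)

/-- The operation at a position of the trace. -/
def opAt {procs : List (List Op)} (p : Pos procs) : Op := (procs.get p.1).get p.2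

/-- `σ` numbers the operations of the trace as a legal schedule respecting program
order: it is injective, operations of the same process keep their order, and every
read reads the value of the latest preceding write on the same variable. -/
def LegalSched (procs : List (List Op)) (σ : Pos procs → ℕ) : Prop :=
  Function.Injective σ ∧
  (∀ p q : Pos procs, p.1.val = q.1.val → p.2.val < q.2.val → σ p < σ q) ∧
  (∀ p : Pos procs, (opAt p).isRead = true →
    ∃ q : Pos procs, (opAt q).isRead = false ∧ σ q < σ p ∧
      (opAt q).var = (opAt p).var ∧ (opAt q).val = (opAt p).val ∧
      ∀ q' : Pos procs, (opAt q').isRead = false → (opAt q').var = (opAt p).var →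
        σ q < σ q' → ¬ σ q' < σ p)

/-- A solution of the 3-Partition instance: an assignment of the `3m` elements to `m`
triples, each summing to `B`. -/
def ThreePartSol (m B : ℕ) (s : Fin (3 * m) → ℕ) : Prop :=
  ∃ f : Fin (3 * m) → Fin m,
    (∀ j : Fin m, (Finset.univ.filter (fun i => f i = j)).card = 3) ∧
    (∀ j : Fin m, ∑ i ∈ Finset.univ.filter (fun i => f i = j), s i = B)

/-!
Each slot sequence of `P₀` reads three values `a'`, then `B` values `b'`, then three values `c'`,
each primed read preceded by a read of an unprimed value. A read placed between two reads of the
same write must read that write too, so distinct primed reads read distinct writes; as there are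
`3m` writes `Wxa'`, `∑ s = mB` writes `Wxb'` and `3m` writes `Wxc'`, every primed write is read
exactly once. Readers of writes appear in the order of the writes, so by program order in
`P_{aᵢ}` the slot `α i` opening `P_{aᵢ}` comes no later than the slot `γ i` closing it, and every
`Wxb'` of `P_{aᵢ}` is read in a slot between the two. Both `α` and `γ` take every value exactly
three times, so `α = γ`, and slot `j` reads exactly the `∑_{α i = j} s i` writes `Wxb'` of the
processes it opens: that number is `B`.
-/

section Counting
open Finset

theorem card_filter_fst_symm_eq {κ β X : Type*} [Fintype κ] [Fintype β] [Fintype X]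
    [DecidableEq κ] (e : κ × β ≃ X) (j : κ) : #{x | (e.symm x).1 = j} = Fintype.card β := by
  rw [card_equiv e.symm (t := {q | q.1 = j}) (by simp),
    show ({q | q.1 = j} : Finset (κ × β)) = {j} ×ˢ univ by ext ⟨a, b⟩; simp [eq_comm],
    card_product]
  simp

theorem sum_comp_eq_sum_card_mul {ι κ : Type*} [Fintype ι] [Fintype κ] [DecidableEq κ]
    (φ : κ → ℕ) (f : ι → κ) : ∑ i, φ (f i) = ∑ j, #{i | f i = j} * φ j := by
  rw [← sum_fiberwise univ f]
  refine sum_congr rfl fun j _ => ?_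
  rw [sum_congr rfl fun i hi => congrArg φ (mem_filter.1 hi).2, sum_const, smul_eq_mul]

theorem eq_of_le_of_card_fiber_eq {ι κ : Type*} [Fintype ι] [Fintype κ] [DecidableEq κ]
    [PartialOrder κ] {φ : κ → ℕ} (hφ : StrictMono φ) {f g : ι → κ} (hfg : f ≤ g)
    (hcard : ∀ j, #{i | f i = j} = #{i | g i = j}) : f = g := by
  have hsum : ∑ i, φ (f i) = ∑ i, φ (g i) := by
    simp only [sum_comp_eq_sum_card_mul, hcard]
  have hle : ∀ i ∈ univ, φ (f i) ≤ φ (g i) := fun i _ => hφ.monotone (hfg i)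
  funext i
  exact (hfg i).eq_of_not_lt fun h =>
    (hφ h).ne ((sum_eq_sum_iff_of_le hle).1 hsum i (mem_univ i))

theorem sum_filter_eq_card_sigma {ι : Type*} [Fintype ι] (s : ι → ℕ) (p : ι → Prop)
    [DecidablePred p] : ∑ i with p i, s i = #{q : Σ i, Fin (s i) | p q.1} := by
  rw [show ({q : Σ i, Fin (s i) | p q.1} : Finset _) = ({i | p i} : Finset ι).sigma fun _ => univ by
    ext; simp, card_sigma]
  simp

/-- Think of `A u` (resp. `C u`) as the item opened (closed) by the `u.2`-th opening (closing)
step of slot `u.1`, and of `F u` as the unit of size counted by the `u.2`-th counting step of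
slot `u.1`, where item `i` has `s i` units. -/
theorem exists_partition_of_equiv {ι κ β : Type*} [Fintype ι] [Fintype κ] [Fintype β]
    [DecidableEq κ] [PartialOrder κ] {φ : κ → ℕ} (hφ : StrictMono φ) {n : ℕ} {s : ι → ℕ}
    (A C : κ × Fin n ≃ ι) (F : κ × β ≃ Σ i, Fin (s i))
    (hAC : ∀ u v, A u = C v → u.1 ≤ v.1)
    (hAF : ∀ u v, A u = (F v).1 → u.1 ≤ v.1)
    (hFC : ∀ u v, (F u).1 = C v → u.1 ≤ v.1) :
    ∃ f : ι → κ, ∀ j, #{i | f i = j} = n ∧ ∑ i with f i = j, s i = Fintype.card β := by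
  set α : ι → κ := fun i => (A.symm i).1
  have hαγ : α = fun i => (C.symm i).1 :=
    eq_of_le_of_card_fiber_eq hφ (fun i => hAC _ _ (by simp))
      fun j => by rw [card_filter_fst_symm_eq, card_filter_fst_symm_eq]
  have hF : ∀ q, (F.symm q).1 = α q.1 := fun q => le_antisymm
    (by rw [hαγ]; exact hFC _ _ (by simp)) (hAF _ _ (by simp))
  refine ⟨α, fun j => ⟨by simpa using card_filter_fst_symm_eq A j, ?_⟩⟩
  rw [sum_filter_eq_card_sigma, ← card_filter_fst_symm_eq F j]
  simp only [hF]

end Counting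

section Schedule
variable {procs : List (List Op)} {σ : Pos procs → ℕ}

def ReadsFrom (σ : Pos procs → ℕ) (r w : Pos procs) : Prop :=
  (opAt w).isRead = false ∧ σ w < σ r ∧ (opAt w).var = (opAt r).var ∧
    (opAt w).val = (opAt r).val ∧
    ∀ q : Pos procs, (opAt q).isRead = false → (opAt q).var = (opAt r).var →
      σ w < σ q → ¬ σ q < σ r

theorem LegalSched.exists_readsFrom (hσ : LegalSched procs σ) {r : Pos procs}
    (hr : (opAt r).isRead = true) : ∃ w, ReadsFrom σ r w :=
  hσ.2.2 r hr

theorem LegalSched.lt_iff_lt (hσ : LegalSched procs σ) {i : Fin procs.length}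
    {k k' : Fin (procs.get i).length} : σ ⟨i, k⟩ < σ ⟨i, k'⟩ ↔ k < k' := by
  refine ⟨fun h => ?_, hσ.2.1 ⟨i, k⟩ ⟨i, k'⟩ rfl⟩
  rcases lt_trichotomy k k' with hk | rfl | hk
  · exact hk
  · exact absurd h (lt_irrefl _)
  · exact absurd h (hσ.2.1 ⟨i, k'⟩ ⟨i, k⟩ rfl hk).asymm

theorem ReadsFrom.lt_of_lt (hinj : Function.Injective σ) {r₁ r₂ w₁ w₂ : Pos procs}
    (h₁ : ReadsFrom σ r₁ w₁) (h₂ : ReadsFrom σ r₂ w₂) (hr₁ : (opAt r₁).isRead = true)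
    (hvar : (opAt r₁).var = (opAt r₂).var) (hw : σ w₁ < σ w₂) : σ r₁ < σ r₂ := by
  have hle : σ r₁ ≤ σ w₂ := not_lt.1 (h₁.2.2.2.2 w₂ h₂.1 (h₂.2.2.1.trans hvar.symm) hw)
  have hne : r₁ ≠ w₂ := fun h => by rw [h, h₂.1] at hr₁; contradiction
  exact (lt_of_le_of_ne hle (hinj.ne hne)).trans h₂.2.1

theorem ReadsFrom.eq_of_lt_of_lt (hinj : Function.Injective σ) {r₁ r r₂ w w' : Pos procs}
    (h₁ : ReadsFrom σ r₁ w) (h : ReadsFrom σ r w') (h₂ : ReadsFrom σ r₂ w)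
    (hvar₁ : (opAt r₁).var = (opAt r).var) (hvar₂ : (opAt r).var = (opAt r₂).var)
    (hlt₁ : σ r₁ < σ r) (hlt₂ : σ r < σ r₂) : w' = w := by
  refine hinj (le_antisymm (not_lt.1 fun hlt => ?_) (not_lt.1 fun hlt => ?_))
  · exact h₂.2.2.2.2 w' h.1 (h.2.2.1.trans hvar₂) hlt (h.2.1.trans hlt₂)
  · exact h.2.2.2.2 w h₁.1 (h₁.2.2.1.trans hvar₁) hlt (h₁.2.1.trans hlt₁)

end Schedule

theorem List.getElem?_flatten_replicate {α : Type*} (l : List α) {n j k : ℕ} (hj : j < n)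
    (hk : k < l.length) : (replicate n l).flatten[l.length * j + k]? = l[k]? := by
  induction j generalizing n with
  | zero =>
    obtain ⟨n, rfl⟩ := Nat.exists_eq_add_one_of_ne_zero (by omega : n ≠ 0)
    simp [replicate_succ, getElem?_append_left hk]
  | succ j ih =>
    obtain ⟨n, rfl⟩ := Nat.exists_eq_add_one_of_ne_zero (by omega : n ≠ 0)
    rw [replicate_succ, flatten_cons, getElem?_append_right (by nlinarith)]
    rw [show l.length * (j + 1) + k - l.length = l.length * j + k by rw [Nat.mul_succ]; omega]
    exact ih (by omega)

section Trace
open List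

def slotPairs (B : ℕ) : List (ℕ × ℕ) :=
  replicate 3 (va, va') ++ replicate B (vb, vb') ++ replicate 3 (vc, vc')

def pairReads (l : List (ℕ × ℕ)) : List Op := l.flatMap fun p => [Rd p.1, Rd p.2]

/-- `P₀` is `pairReads (p0Pairs m B)` (`P0_eq_pairReads`): pair `c` is read at positions `2c`
and `2c + 1` of `P₀`, and pair `r` of slot `j` is pair `(B + 6) * j + r` (`slotPair`). -/
def p0Pairs (m B : ℕ) : List (ℕ × ℕ) := (replicate m (slotPairs B)).flatten

theorem length_slotPairs (B : ℕ) : (slotPairs B).length = B + 6 := by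
  simp [slotPairs]

theorem mem_slotPairs {B : ℕ} {p : ℕ × ℕ} (hp : p ∈ slotPairs B) :
    p = (va, va') ∨ p = (vb, vb') ∨ p = (vc, vc') := by
  simp only [slotPairs, mem_append, mem_replicate] at hp
  tauto

theorem getElem_slotPairs_of_lt_three {B r : ℕ} (hr : r < 3) :
    (slotPairs B)[r]'(by rw [length_slotPairs]; omega) = (va, va') := by
  simp only [slotPairs]
  rw [getElem_append_left (by simp; omega), getElem_append_left (by simp; omega),
    getElem_replicate]

theorem getElem_slotPairs_three_add {B t : ℕ} (ht : t < B) :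
    (slotPairs B)[3 + t]'(by rw [length_slotPairs]; omega) = (vb, vb') := by
  simp only [slotPairs]
  rw [getElem_append_left (by simp; omega), getElem_append_right (by simp), getElem_replicate]

theorem getElem_slotPairs_three_add_add {B t : ℕ} (ht : t < 3) :
    (slotPairs B)[3 + B + t]'(by rw [length_slotPairs]; omega) = (vc, vc') := by
  simp only [slotPairs]
  rw [getElem_append_right (by simp only [length_append, length_replicate]; omega),
    getElem_replicate]

theorem length_pairReads (l : List (ℕ × ℕ)) : (pairReads l).length = 2 * l.length := by
  induction l with
  | nil => rfl
  | cons p l ih => simp [pairReads] at ih ⊢; omega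

theorem getElem?_pairReads_two_mul (l : List (ℕ × ℕ)) (c : ℕ) :
    (pairReads l)[2 * c]? = l[c]?.map fun p => Rd p.1 := by
  induction l generalizing c with
  | nil => rfl
  | cons p l ih =>
    cases c with
    | zero => rfl
    | succ c => simpa [pairReads, Nat.mul_succ] using ih c

theorem getElem?_pairReads_two_mul_add_one (l : List (ℕ × ℕ)) (c : ℕ) :
    (pairReads l)[2 * c + 1]? = l[c]?.map fun p => Rd p.2 := by
  induction l generalizing c with
  | nil => rfl
  | cons p l ih =>
    cases c with
    | zero => rfl
    | succ c => simpa [pairReads, Nat.mul_succ] using ih c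

variable {m B : ℕ} {s : Fin (3 * m) → ℕ}

theorem P0_eq_pairReads : P0 m B = pairReads (p0Pairs m B) := by
  simp [P0, pairReads, p0Pairs, slotPairs, openSeq, sumSeq, closeSeq, flatMap_def,
    flatten_flatten, map_replicate]

theorem length_P0 : (P0 m B).length = 2 * (p0Pairs m B).length := by
  rw [P0_eq_pairReads, length_pairReads]

theorem mem_p0Pairs {p : ℕ × ℕ} (hp : p ∈ p0Pairs m B) :
    p = (va, va') ∨ p = (vb, vb') ∨ p = (vc, vc') := by
  obtain ⟨l, hl, hp⟩ := mem_flatten.1 hp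
  exact mem_slotPairs (eq_of_mem_replicate hl ▸ hp)

theorem isRead_of_mem_P0 {o : Op} (ho : o ∈ P0 m B) : o.isRead = true := by
  rw [P0_eq_pairReads, pairReads, mem_flatMap] at ho
  obtain ⟨p, -, ho⟩ := ho
  rcases mem_pair.1 ho with rfl | rfl <;> rfl

def slotPair (j : Fin m) (r : Fin (B + 6)) : Fin (p0Pairs m B).length :=
  ⟨(B + 6) * j + r, by
    have : (p0Pairs m B).length = (B + 6) * m := by simp [p0Pairs, length_slotPairs, mul_comm]
    rw [this]; nlinarith [j.isLt, r.isLt]⟩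

theorem getElem_p0Pairs_slotPair (j : Fin m) (r : Fin (B + 6)) :
    (p0Pairs m B)[slotPair j r] =
      (slotPairs B)[(r : ℕ)]'(by rw [length_slotPairs]; exact r.isLt) := by
  have hr : (r : ℕ) < (slotPairs B).length := by rw [length_slotPairs]; exact r.isLt
  have h : (p0Pairs m B)[(slotPair j r : ℕ)]? = (slotPairs B)[(r : ℕ)]? := by
    have h := getElem?_flatten_replicate (slotPairs B) j.isLt hr
    rw [length_slotPairs] at h
    exact h
  rw [getElem?_eq_getElem (slotPair j r).isLt, getElem?_eq_getElem hr] at h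
  exact Option.some_injective _ h

theorem slotPair_inj {j j' : Fin m} {r r' : Fin (B + 6)} (h : slotPair j r = slotPair j' r') :
    j = j' ∧ r = r' := by
  have h : (B + 6) * j + r = (B + 6) * j' + r' := congrArg Fin.val h
  have hj : (j : ℕ) = j' := by
    have := congrArg (· / (B + 6)) h
    simpa [Nat.mul_add_div, Nat.div_eq_of_lt r.isLt, Nat.div_eq_of_lt r'.isLt] using this
  exact ⟨Fin.ext hj, Fin.ext (by rw [hj] at h; omega)⟩

theorem slotPair_offset_injective {o n : ℕ} (h : o + n ≤ B + 6) :
    Function.Injective fun u : Fin m × Fin n => slotPair (B := B) u.1 ⟨o + u.2, by omega⟩ := by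
  intro u v huv
  obtain ⟨hj, hr⟩ := slotPair_inj huv
  exact Prod.ext hj (Fin.ext (by simpa using congrArg Fin.val hr))

theorem le_of_slotPair_le {j j' : Fin m} {r r' : Fin (B + 6)}
    (h : slotPair j r ≤ slotPair j' r') : j ≤ j' := by
  have h : (B + 6) * j + r ≤ (B + 6) * j' + r' := h
  have := Nat.div_le_div_right (c := B + 6) h
  simpa [Nat.mul_add_div, Nat.div_eq_of_lt r.isLt, Nat.div_eq_of_lt r'.isLt] using this

theorem getElem_Pa (sz k : ℕ) (hk : k < (Pa sz).length) :
    (Pa sz)[k] = Wr (if k = 0 then va' else if k ≤ sz then vb' else vc') := by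
  cases k with
  | zero => rfl
  | succ k =>
    simp only [Pa, length_cons, length_append, length_replicate, length_nil] at hk
    simp only [Pa, getElem_cons_succ, getElem_append, length_replicate, Nat.add_one_ne_zero,
      if_false, Nat.add_one_le_iff]
    split_ifs
    · exact getElem_replicate _
    · simp [show k - sz = 0 by omega]

theorem length_reductionTrace : (reductionTrace m B s).length = 3 * m + 4 := by
  simp [reductionTrace]

theorem getElem_reductionTrace_succ (i : Fin (3 * m))
    (h : i.val + 1 < (reductionTrace m B s).length) :
    (reductionTrace m B s)[i.val + 1] = Pa (s i) := by
  simp [reductionTrace, getElem_append_left]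

theorem length_get_reductionTrace_succ (i : Fin (3 * m))
    (h : i.val + 1 < (reductionTrace m B s).length) :
    ((reductionTrace m B s).get ⟨i.val + 1, h⟩).length = s i + 2 := by
  simp [getElem_reductionTrace_succ, Pa]

theorem val_of_mem_getElem_reductionTrace {a : ℕ} (ha : 3 * m < a)
    (h : a < (reductionTrace m B s).length) {o : Op} (ho : o ∈ (reductionTrace m B s)[a]) :
    o.val = va ∨ o.val = vb ∨ o.val = vc := by
  rw [length_reductionTrace] at h
  obtain ⟨e, rfl⟩ := Nat.exists_eq_add_of_lt ha
  have he : e < 3 := by omega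
  simp only [reductionTrace, getElem_cons_succ] at ho
  rw [getElem_append_right (by simp)] at ho
  simp only [length_ofFn, show 3 * m + e - 3 * m = e by omega] at ho
  interval_cases e <;> simp [eq_of_mem_replicate ho, Wr]

theorem var_opAt (p : Pos (reductionTrace m B s)) : (opAt p).var = 0 := by
  have hmem : ∀ l ∈ reductionTrace m B s, ∀ o ∈ l, o.var = 0 := by
    simp only [reductionTrace, P0, Pa, openSeq, sumSeq, closeSeq, Wr, Rd]
    aesop
  exact hmem _ (get_mem _ _) _ (get_mem _ _)

def p0Pos (k : ℕ) (hk : k < (P0 m B).length) : Pos (reductionTrace m B s) :=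
  ⟨⟨0, by simp [reductionTrace]⟩, ⟨k, hk⟩⟩

def plainRead (c : Fin (p0Pairs m B).length) : Pos (reductionTrace m B s) :=
  p0Pos (2 * c) (by rw [length_P0]; omega)

def primedRead (c : Fin (p0Pairs m B).length) : Pos (reductionTrace m B s) :=
  p0Pos (2 * c + 1) (by rw [length_P0]; omega)

theorem opAt_plainRead (c : Fin (p0Pairs m B).length) :
    opAt (plainRead (s := s) c) = Rd (p0Pairs m B)[c].1 := by
  have h := getElem?_pairReads_two_mul (p0Pairs m B) c
  rw [← P0_eq_pairReads, getElem?_eq_getElem (by rw [length_P0]; omega),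
    getElem?_eq_getElem c.isLt] at h
  exact Option.some_injective _ h

theorem opAt_primedRead (c : Fin (p0Pairs m B).length) :
    opAt (primedRead (s := s) c) = Rd (p0Pairs m B)[c].2 := by
  have h := getElem?_pairReads_two_mul_add_one (p0Pairs m B) c
  rw [← P0_eq_pairReads, getElem?_eq_getElem (by rw [length_P0]; omega),
    getElem?_eq_getElem c.isLt] at h
  exact Option.some_injective _ h

def writePos (x : Σ i : Fin (3 * m), Fin (s i + 2)) : Pos (reductionTrace m B s) :=
  ⟨⟨x.1 + 1, by rw [length_reductionTrace]; omega⟩,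
    ⟨x.2, by rw [length_get_reductionTrace_succ]; exact x.2.isLt⟩⟩

theorem opAt_writePos (x : Σ i : Fin (3 * m), Fin (s i + 2)) :
    opAt (writePos (B := B) x) =
      Wr (if x.2.val = 0 then va' else if x.2.val ≤ s x.1 then vb' else vc') := by
  simp only [opAt, writePos, get_eq_getElem, getElem_reductionTrace_succ, getElem_Pa]

theorem exists_eq_writePos {q : Pos (reductionTrace m B s)} (hq : (opAt q).isRead = false)
    (hv : (opAt q).val = va' ∨ (opAt q).val = vb' ∨ (opAt q).val = vc') :
    ∃ x, q = writePos x := by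
  obtain ⟨⟨a, ha⟩, k⟩ := q
  have hmem : opAt ⟨⟨a, ha⟩, k⟩ ∈ (reductionTrace m B s)[a] := get_mem _ _
  rcases a with _ | a
  · simp [isRead_of_mem_P0 hmem] at hq
  by_cases hi : a < 3 * m
  · exact ⟨⟨⟨a, hi⟩, ⟨k, by rw [← length_get_reductionTrace_succ ⟨a, hi⟩ ha]; exact k.isLt⟩⟩, rfl⟩
  · rcases val_of_mem_getElem_reductionTrace (by omega) ha hmem with h | h | h <;>
      rw [h] at hv <;> simp [va, va', vb, vb', vc, vc'] at hv

end Trace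

section TraceSchedule
variable {m B : ℕ} {s : Fin (3 * m) → ℕ} {σ : Pos (reductionTrace m B s) → ℕ}

theorem LegalSched.p0Pos_lt_p0Pos_iff (hσ : LegalSched (reductionTrace m B s) σ) {k k' : ℕ}
    {hk : k < (P0 m B).length} {hk' : k' < (P0 m B).length} :
    σ (p0Pos k hk) < σ (p0Pos k' hk') ↔ k < k' :=
  hσ.lt_iff_lt

theorem LegalSched.primedRead_lt_primedRead_iff (hσ : LegalSched (reductionTrace m B s) σ)
    {c c' : Fin (p0Pairs m B).length} : σ (primedRead c) < σ (primedRead c') ↔ c < c' :=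
  hσ.p0Pos_lt_p0Pos_iff.trans (by rw [Fin.lt_def]; omega)

theorem LegalSched.eq_of_readsFrom_primedRead (hσ : LegalSched (reductionTrace m B s) σ)
    {c c' : Fin (p0Pairs m B).length} {w : Pos (reductionTrace m B s)}
    (h : ReadsFrom σ (primedRead c) w) (h' : ReadsFrom σ (primedRead c') w) : c = c' := by
  wlog hlt : c < c' generalizing c c'
  · rcases (not_lt.1 hlt).lt_or_eq with hlt | hc
    · exact (this h' h hlt).symm
    · exact hc.symm
  -- the read of the unprimed value of pair `c'` lies between, so it reads `w` as well
  obtain ⟨w', hw'⟩ := hσ.exists_readsFrom (r := plainRead c') (by rw [opAt_plainRead]; rfl)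
  have hw := ReadsFrom.eq_of_lt_of_lt hσ.1 h hw' h' (by rw [var_opAt, var_opAt])
    (by rw [var_opAt, var_opAt]) (hσ.p0Pos_lt_p0Pos_iff.2 (by rw [Fin.lt_def] at hlt; omega))
    (hσ.p0Pos_lt_p0Pos_iff.2 (by omega))
  have hval : (p0Pairs m B)[c'].1 = (p0Pairs m B)[c].2 := by
    have := hw'.2.2.2.1
    rw [hw, h.2.2.2.1, opAt_plainRead, opAt_primedRead] at this
    exact this.symm
  rcases mem_p0Pairs (List.getElem_mem c.isLt) with h₁ | h₁ | h₁ <;>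
    rcases mem_p0Pairs (List.getElem_mem c'.isLt) with h₂ | h₂ | h₂ <;>
    simp [h₁, h₂, va, va', vb, vb', vc, vc'] at hval

theorem LegalSched.exists_readsFrom_primedRead (hσ : LegalSched (reductionTrace m B s) σ)
    (c : Fin (p0Pairs m B).length) :
    ∃ x, ReadsFrom σ (primedRead c) (writePos x) ∧
      (opAt (writePos (B := B) x)).val = (p0Pairs m B)[c].2 := by
  obtain ⟨w, hw⟩ := hσ.exists_readsFrom (r := primedRead c) (by rw [opAt_primedRead]; rfl)
  have hval : (opAt w).val = (p0Pairs m B)[c].2 := by rw [hw.2.2.2.1, opAt_primedRead]; rfl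
  obtain ⟨x, rfl⟩ : ∃ x, w = writePos x := exists_eq_writePos hw.1 (by
    rw [hval]; rcases mem_p0Pairs (List.getElem_mem c.isLt) with h | h | h <;> simp [h])
  exact ⟨x, hw, hval⟩

theorem LegalSched.exists_opened (hσ : LegalSched (reductionTrace m B s) σ) (j : Fin m)
    (t : Fin 3) :
    ∃ i, ReadsFrom σ (primedRead (slotPair j ⟨t, by omega⟩)) (writePos ⟨i, 0⟩) := by
  obtain ⟨⟨i, k⟩, h, hval⟩ := hσ.exists_readsFrom_primedRead (slotPair j ⟨t, by omega⟩)
  rw [getElem_p0Pairs_slotPair, getElem_slotPairs_of_lt_three t.isLt, opAt_writePos] at hval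
  dsimp only at hval
  obtain rfl : k = 0 := by
    split_ifs at hval with h0 <;> first | exact Fin.ext h0 | simp [Wr, va', vb', vc'] at hval
  exact ⟨i, h⟩

theorem LegalSched.exists_counted (hσ : LegalSched (reductionTrace m B s) σ) (j : Fin m)
    (t : Fin B) : ∃ q : Σ i, Fin (s i), ReadsFrom σ (primedRead (slotPair j ⟨3 + t, by omega⟩))
      (writePos ⟨q.1, ⟨q.2 + 1, by omega⟩⟩) := by
  obtain ⟨⟨i, k⟩, h, hval⟩ := hσ.exists_readsFrom_primedRead (slotPair j ⟨3 + t, by omega⟩)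
  rw [getElem_p0Pairs_slotPair, getElem_slotPairs_three_add t.isLt, opAt_writePos] at hval
  dsimp only at hval
  split_ifs at hval with h0 h1 <;> try simp [Wr, va', vb', vc'] at hval
  exact ⟨⟨i, ⟨k - 1, by omega⟩⟩, by convert h using 3; ext; simp; omega⟩

theorem LegalSched.exists_closed (hσ : LegalSched (reductionTrace m B s) σ) (j : Fin m)
    (t : Fin 3) : ∃ i, ReadsFrom σ (primedRead (slotPair j ⟨3 + B + t, by omega⟩))
      (writePos ⟨i, Fin.last _⟩) := by
  obtain ⟨⟨i, k⟩, h, hval⟩ := hσ.exists_readsFrom_primedRead (slotPair j ⟨3 + B + t, by omega⟩)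
  rw [getElem_p0Pairs_slotPair, getElem_slotPairs_three_add_add t.isLt, opAt_writePos] at hval
  dsimp only at hval
  split_ifs at hval with h0 h1 <;> try simp [Wr, va', vb', vc'] at hval
  obtain rfl : k = Fin.last _ := Fin.ext (by simp; omega)
  exact ⟨i, h⟩

theorem LegalSched.le_of_readsFrom_writePos (hσ : LegalSched (reductionTrace m B s) σ)
    {j j' : Fin m} {r r' : Fin (B + 6)} {x y : Σ i : Fin (3 * m), Fin (s i + 2)}
    (h : ReadsFrom σ (primedRead (slotPair j r)) (writePos x))
    (h' : ReadsFrom σ (primedRead (slotPair j' r')) (writePos y))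
    (hxy : x.1 = y.1) (hlt : x.2.val < y.2.val) : j ≤ j' := by
  have hw : σ (writePos x) < σ (writePos y) := hσ.2.1 _ _ (by simp [writePos, hxy]) hlt
  have hr := h.lt_of_lt hσ.1 h' (by rw [opAt_primedRead]; rfl) (by rw [var_opAt, var_opAt]) hw
  exact le_of_slotPair_le (hσ.primedRead_lt_primedRead_iff.1 hr).le

theorem LegalSched.threePartSol (hσ : LegalSched (reductionTrace m B s) σ)
    (hsum : ∑ i, s i = m * B) : ThreePartSol m B s := by
  choose A hA using fun u : Fin m × Fin 3 => hσ.exists_opened u.1 u.2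
  choose F hF using fun u : Fin m × Fin B => hσ.exists_counted u.1 u.2
  choose C hC using fun u : Fin m × Fin 3 => hσ.exists_closed u.1 u.2
  have hAbij : Function.Bijective A :=
    (Fintype.bijective_iff_injective_and_card A).2 ⟨fun u v huv =>
      slotPair_offset_injective (o := 0) (by omega)
        (by simpa using hσ.eq_of_readsFrom_primedRead (hA u) (by rw [huv]; exact hA v)),
      by simp [mul_comm]⟩
  have hFbij : Function.Bijective F :=
    (Fintype.bijective_iff_injective_and_card F).2 ⟨fun u v huv =>
      slotPair_offset_injective (o := 3) (by omega)
        (hσ.eq_of_readsFrom_primedRead (hF u) (by rw [huv]; exact hF v)),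
      by simp [hsum]⟩
  have hCbij : Function.Bijective C :=
    (Fintype.bijective_iff_injective_and_card C).2 ⟨fun u v huv =>
      slotPair_offset_injective (o := 3 + B) (by omega)
        (hσ.eq_of_readsFrom_primedRead (hC u) (by rw [huv]; exact hC v)),
      by simp [mul_comm]⟩
  obtain ⟨f, hf⟩ := exists_partition_of_equiv Fin.val_strictMono
    (Equiv.ofBijective A hAbij) (Equiv.ofBijective C hCbij) (Equiv.ofBijective F hFbij)
    (fun u v h => hσ.le_of_readsFrom_writePos (hA u) (hC v) h (by simp))
    (fun u v h => hσ.le_of_readsFrom_writePos (hA u) (hF v) h (by simp))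
    (fun u v h => hσ.le_of_readsFrom_writePos (hF u) (hC v) h
      (by rw [show C v = (F u).1 from h.symm]; simp))
  exact ⟨f, fun j => (hf j).1, fun j => by simpa using (hf j).2⟩

end TraceSchedule

theorem stmt12_general (m B : ℕ) (s : Fin (3 * m) → ℕ)
    (hsum : ∑ i, s i = m * B)
    (hsched : ∃ σ : Pos (reductionTrace m B s) → ℕ,
      LegalSched (reductionTrace m B s) σ) :
    ThreePartSol m B s := by
  obtain ⟨σ, hσ⟩ := hsched
  exact hσ.threePartSol hsum

/-- Soundness of the reduction: if the reduction trace admits a legal schedule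
respecting program order, then (the triples of processes opened in each slot sequence
sum to exactly `B`, and consequently) the Unary 3-Partition instance has a solution. -/
theorem stmt12 (m B : ℕ) (s : Fin (3 * m) → ℕ) (hm : 0 < m)
    (hsize : ∀ i, B < 4 * s i ∧ 2 * s i < B)
    (hsum : ∑ i, s i = m * B)
    (hsched : ∃ σ : Pos (reductionTrace m B s) → ℕ,
      LegalSched (reductionTrace m B s) σ) :
    ThreePartSol m B s :=
  stmt12_general m B s hsum hsched
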